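/- arXiv:2209.15060 — 2 statements merged into one kernel-verified Lean document; each statement's English description precedes it below -/
import Mathlib

section
/- Let f : ℝ → ℝ be 2π-periodic with continuous derivative f_x satisfying ‖f_x‖₂ < ∞, and let K_p > 0. Let e : ℝ × [0,∞) → ℝ be continuously differentiable, 2π-periodic in x, and satisfy the closed-loop error dynamics e_t(x,t) + ∂_x( e(x,t) · (−V^e(x,t)) ) = −K_p e(x,t) for all x and t ≥ 0, where V^e(·,t) = f * e(·,t). If γ > 0 is such that ‖e(·,0)‖₂ < γ and 2K_p > γ‖f_x‖₂, then ‖e(·,t)‖₂² ≤ ‖e(·,0)‖₂² · exp(−(2K_p − γ‖f_x‖₂) t) for all t ≥ 0; in particular ‖e(·,t)‖₂ → 0 as t → ∞. -/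
/-!
Energy estimate. For `V t = ‖e(·,t)‖₂²`, `u = e(·,t)` and `w = f * u`, the equation reads
`u_t = -K_p u + (u w)_x`. Since `(u² w)_x = 2 u u_x w + u² w_x` integrates to zero over a period,
`V' = -2 K_p V + ∫ u² w_x`, and Cauchy–Schwarz together with the translation invariance of
`‖f_x(x - ·)‖₂` gives `|w_x| = |f_x * u| ≤ ‖f_x‖₂ √V`, so `V' ≤ (-2 K_p + ‖f_x‖₂ √V) V`.
As long as `√V < γ` the right-hand side is negative, so a barrier argument keeps `√V < γ` for all
time; then `V' ≤ -(2 K_p - γ ‖f_x‖₂) V` and Grönwall's inequality gives the exponential decay.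
-/

open Real MeasureTheory Filter Set

/-- Circular convolution of two (2π-periodic) functions on the unit circle
`S = [-π, π]`: `(g * h)(x) = ∫_{-π}^{π} g (x - y) h y dy`. -/
noncomputable def circConv (g h : ℝ → ℝ) (x : ℝ) : ℝ :=
  ∫ y in (-Real.pi)..Real.pi, g (x - y) * h y

theorem abs_integral_mul_le_sqrt_mul_sqrt {α : Type*} [MeasurableSpace α] {μ : Measure α}
    {u v : α → ℝ} (hu : Integrable (fun x => u x ^ 2) μ) (hv : Integrable (fun x => v x ^ 2) μ)
    (huv : Integrable (fun x => u x * v x) μ) :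
    |∫ x, u x * v x ∂μ| ≤ √(∫ x, u x ^ 2 ∂μ) * √(∫ x, v x ^ 2 ∂μ) := by
  set A := ∫ x, u x ^ 2 ∂μ
  set B := ∫ x, u x * v x ∂μ
  set C := ∫ x, v x ^ 2 ∂μ
  have hA : 0 ≤ A := integral_nonneg fun x => sq_nonneg _
  have hquad : ∀ l : ℝ, 0 ≤ C * (l * l) + 2 * B * l + A := fun l => by
    have hexp : ∫ x, (u x + l * v x) ^ 2 ∂μ = C * (l * l) + 2 * B * l + A := by
      have hpt : (fun x => (u x + l * v x) ^ 2)
          = fun x => u x ^ 2 + ((2 * l) * (u x * v x) + (l * l) * v x ^ 2) := by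
        ext x; ring
      have hrest : Integrable (fun x => (2 * l) * (u x * v x) + (l * l) * v x ^ 2) μ :=
        (huv.const_mul _).add (hv.const_mul _)
      rw [hpt, integral_add hu hrest, integral_add (huv.const_mul _) (hv.const_mul _),
        MeasureTheory.integral_const_mul, MeasureTheory.integral_const_mul]
      ring
    exact hexp ▸ integral_nonneg fun x => sq_nonneg _
  have hB : B ^ 2 ≤ A * C := by
    have := discrim_le_zero hquad
    rw [discrim] at this
    linarith
  rw [← sqrt_mul hA, ← sqrt_sq_eq_abs]
  exact sqrt_le_sqrt hB

theorem hasDerivAt_intervalIntegral_of_continuous_deriv {F F' : ℝ → ℝ → ℝ} {a b : ℝ}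
    (hF : ∀ t, Continuous (F t)) (hF' : Continuous (Function.uncurry F'))
    (hderiv : ∀ t x, HasDerivAt (F · x) (F' t x) t) (t₀ : ℝ) :
    HasDerivAt (fun t => ∫ x in a..b, F t x) (∫ x in a..b, F' t₀ x) t₀ := by
  obtain ⟨M, hM⟩ := (isCompact_closedBall t₀ 1 |>.prod isCompact_uIcc).exists_bound_of_continuousOn
    hF'.continuousOn
  have hF'_slice : ∀ t, Continuous (F' t) := fun t => hF'.comp (Continuous.prodMk_right t)
  refine (intervalIntegral.hasDerivAt_integral_of_dominated_loc_of_deriv_le (bound := fun _ => M)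
    (Metric.closedBall_mem_nhds t₀ one_pos) (Eventually.of_forall fun t =>
      (hF t).aestronglyMeasurable) ((hF t₀).intervalIntegrable _ _)
    (hF'_slice t₀).aestronglyMeasurable ?_ intervalIntegrable_const
    (Eventually.of_forall fun x _ t _ => hderiv t x)).2
  exact Eventually.of_forall fun x hx t ht => hM (t, x) ⟨ht, uIoc_subset_uIcc hx⟩

theorem integral_two_mul_mul_deriv_add_eq {u u' w w' : ℝ → ℝ} {a b : ℝ}
    (hu : ∀ x, HasDerivAt u (u' x) x) (hw : ∀ x, HasDerivAt w (w' x) x)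
    (hu' : Continuous u') (hw' : Continuous w') (hab_u : u a = u b) (hab_w : w a = w b) :
    ∫ x in a..b, 2 * u x * (u' x * w x + u x * w' x) = ∫ x in a..b, u x ^ 2 * w' x := by
  have huc : Continuous u := continuous_iff_continuousAt.2 fun x => (hu x).continuousAt
  have hwc : Continuous w := continuous_iff_continuousAt.2 fun x => (hw x).continuousAt
  have hderiv : ∀ x, HasDerivAt (fun x => u x ^ 2 * w x)
      (2 * u x * u' x * w x + u x ^ 2 * w' x) x := fun x =>
    (((hu x).fun_pow 2).mul (hw x)).congr_deriv (by push_cast; ring)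
  have hcont : Continuous fun x => 2 * u x * u' x * w x + u x ^ 2 * w' x := by fun_prop
  have htotal : ∫ x in a..b, (2 * u x * u' x * w x + u x ^ 2 * w' x) = 0 := by
    rw [intervalIntegral.integral_eq_sub_of_hasDerivAt (fun x _ => hderiv x)
      (hcont.intervalIntegrable _ _), hab_u, hab_w, sub_self]
  have hpt : (fun x => 2 * u x * (u' x * w x + u x * w' x))
      = fun x => (2 * u x * u' x * w x + u x ^ 2 * w' x) + u x ^ 2 * w' x := by
    ext x; ring
  rw [hpt, intervalIntegral.integral_add (hcont.intervalIntegrable _ _)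
    ((by fun_prop : Continuous fun x => u x ^ 2 * w' x).intervalIntegrable _ _), htotal, zero_add]

theorem hasDerivAt_uncurry_fst {e : ℝ → ℝ → ℝ} (he : Differentiable ℝ (Function.uncurry e))
    (x t : ℝ) : HasDerivAt (e · t) (fderiv ℝ (Function.uncurry e) (x, t) (1, 0)) x :=
  (he (x, t)).hasFDerivAt.comp_hasDerivAt (f := fun x => (x, t)) x
    ((hasDerivAt_id' x).prodMk (hasDerivAt_const x t))

theorem hasDerivAt_uncurry_snd {e : ℝ → ℝ → ℝ} (he : Differentiable ℝ (Function.uncurry e))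
    (x t : ℝ) : HasDerivAt (e x ·) (fderiv ℝ (Function.uncurry e) (x, t) (0, 1)) t :=
  (he (x, t)).hasFDerivAt.comp_hasDerivAt t ((hasDerivAt_const t x).prodMk (hasDerivAt_id t))

theorem hasDerivAt_integral_sq {e : ℝ → ℝ → ℝ} (he : ContDiff ℝ 1 (Function.uncurry e))
    (a b t : ℝ) :
    HasDerivAt (fun t => ∫ x in a..b, e x t ^ 2)
      (∫ x in a..b, 2 * e x t * fderiv ℝ (Function.uncurry e) (x, t) (0, 1)) t := by
  have hdiff := he.differentiable one_ne_zero
  have hcont : Continuous fun p : ℝ × ℝ => fderiv ℝ (Function.uncurry e) p (0, 1) :=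
    (he.continuous_fderiv one_ne_zero).clm_apply continuous_const
  refine hasDerivAt_intervalIntegral_of_continuous_deriv (F := fun t x => e x t ^ 2)
    (F' := fun t x => 2 * e x t * fderiv ℝ (Function.uncurry e) (x, t) (0, 1))
    (fun t => ?_) ?_ (fun t x => ?_) t
  · exact (he.continuous.comp (Continuous.prodMk_left t)).pow 2
  · exact (continuous_const.mul (he.continuous.comp continuous_swap)).mul
      (hcont.comp continuous_swap)
  · exact ((hasDerivAt_uncurry_snd hdiff x t).fun_pow 2).congr_deriv (by push_cast; ring)

theorem sqrt_lt_of_deriv_le_sqrt_mul {V V' : ℝ → ℝ} {a c γ : ℝ}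
    (hV : ∀ t, HasDerivAt V (V' t) t) (hc : 0 ≤ c) (hγc : γ * c < a) (h0 : √(V 0) < γ)
    (hineq : ∀ t, 0 ≤ t → V' t ≤ (-a + c * √(V t)) * V t) :
    ∀ t, 0 ≤ t → √(V t) < γ := by
  obtain ⟨β, hV0β, hβγ⟩ := exists_between h0
  have hβ : 0 < β := (sqrt_nonneg _).trans_lt hV0β
  have hfence : ∀ t, 0 ≤ t → V t ≤ β ^ 2 := fun t ht =>
    image_le_of_deriv_right_lt_deriv_boundary (a := 0) (b := t) (B := fun _ => β ^ 2)
      (fun s _ => (hV s).continuousAt.continuousWithinAt) (fun s _ => (hV s).hasDerivWithinAt)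
      ((sqrt_lt' hβ).1 hV0β).le (fun _ => hasDerivAt_const _ _)
      (fun s hs hVs => by
        have hβc : β * c < a := (mul_le_mul_of_nonneg_right hβγ.le hc).trans_lt hγc
        calc V' s ≤ (-a + c * √(V s)) * V s := hineq s hs.1
          _ = (-a + c * β) * β ^ 2 := by rw [hVs, sqrt_sq hβ.le]
          _ < 0 := mul_neg_of_neg_of_pos (by linarith) (by positivity))
      ⟨ht, le_rfl⟩
  intro t ht
  calc √(V t) ≤ √(β ^ 2) := sqrt_le_sqrt (hfence t ht)
    _ = β := sqrt_sq hβ.le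
    _ < γ := hβγ

theorem le_mul_exp_of_deriv_le_mul {V V' : ℝ → ℝ} {K : ℝ} (hV : ∀ t, HasDerivAt V (V' t) t)
    (hineq : ∀ t, 0 ≤ t → V' t ≤ K * V t) (t : ℝ) (ht : 0 ≤ t) :
    V t ≤ V 0 * exp (K * t) := by
  have := le_gronwallBound_of_liminf_deriv_right_le (a := 0) (b := t) (δ := V 0) (ε := 0)
    (fun s _ => (hV s).continuousAt.continuousWithinAt)
    (fun s _ r hr => (hV s).hasDerivWithinAt.liminf_right_slope_le hr) le_rfl
    (fun s hs => by simpa using hineq s hs.1) t ⟨ht, le_rfl⟩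
  simpa [gronwallBound_ε0] using this

theorem le_mul_exp_of_deriv_le_sqrt_mul {V V' : ℝ → ℝ} {a c γ : ℝ}
    (hV : ∀ t, HasDerivAt V (V' t) t) (hV_nonneg : ∀ t, 0 ≤ V t) (hc : 0 ≤ c)
    (hγc : γ * c < a) (h0 : √(V 0) < γ)
    (hineq : ∀ t, 0 ≤ t → V' t ≤ (-a + c * √(V t)) * V t) (t : ℝ) (ht : 0 ≤ t) :
    V t ≤ V 0 * exp (-(a - γ * c) * t) := by
  refine le_mul_exp_of_deriv_le_mul hV (fun s hs => ?_) t ht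
  have hsqrt := sqrt_lt_of_deriv_le_sqrt_mul hV hc hγc h0 hineq s hs
  calc V' s ≤ (-a + c * √(V s)) * V s := hineq s hs
    _ ≤ -(a - γ * c) * V s := by
      gcongr ?_ * _
      · exact hV_nonneg s
      · linarith [mul_le_mul_of_nonneg_right hsqrt.le hc]

theorem tendsto_sqrt_of_le_mul_exp {V : ℝ → ℝ} {C K : ℝ} (hK : 0 < K)
    (hV : ∀ t, 0 ≤ t → V t ≤ C * exp (-K * t)) : Tendsto (fun t => √(V t)) atTop (nhds 0) := by
  have hbound : Tendsto (fun t => √(C * exp (-K * t))) atTop (nhds 0) := by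
    have hexp : Tendsto (fun t => exp (-K * t)) atTop (nhds 0) :=
      tendsto_exp_atBot.comp <| tendsto_id.const_mul_atTop_of_neg (neg_lt_zero.2 hK)
    have := (continuous_sqrt.tendsto (C * 0)).comp (hexp.const_mul C)
    rwa [mul_zero, sqrt_zero] at this
  refine squeeze_zero' (Eventually.of_forall fun t => sqrt_nonneg _) ?_ hbound
  filter_upwards [eventually_ge_atTop 0] with t ht
  exact sqrt_le_sqrt (hV t ht)

theorem Function.Periodic.deriv {g : ℝ → ℝ} {T : ℝ} (hg : Function.Periodic g T) :
    Function.Periodic (deriv g) T := fun x => by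
  rw [← deriv_comp_add_const, hg.funext]

theorem Function.Periodic.circConv {g : ℝ → ℝ} {T : ℝ} (hg : Function.Periodic g T)
    (h : ℝ → ℝ) : Function.Periodic (circConv g h) T := fun x => by
  simp only [_root_.circConv, add_sub_right_comm, hg _]

theorem continuous_circConv {g h : ℝ → ℝ} (hg : Continuous g) (hh : Continuous h) :
    Continuous (circConv g h) :=
  intervalIntegral.continuous_parametric_intervalIntegral_of_continuous'
    (f := fun x y => g (x - y) * h y) (by fun_prop) _ _

theorem hasDerivAt_circConv {g g' h : ℝ → ℝ} (hg : ∀ x, HasDerivAt g (g' x) x)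
    (hg' : Continuous g') (hh : Continuous h) (x : ℝ) :
    HasDerivAt (circConv g h) (circConv g' h x) x := by
  have hgc : Continuous g := continuous_iff_continuousAt.2 fun x => (hg x).continuousAt
  refine hasDerivAt_intervalIntegral_of_continuous_deriv (F := fun x y => g (x - y) * h y)
    (F' := fun x y => g' (x - y) * h y) (fun x => by fun_prop)
    (by fun_prop) (fun x y => ?_) x
  exact (((hg (x - y)).comp x ((hasDerivAt_id x).sub_const y)).mul_const (h y)).congr_deriv
    (by simp)

theorem integral_comp_sub_sq_of_periodic {g : ℝ → ℝ} (hg : Function.Periodic g (2 * π))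
    (x : ℝ) : ∫ y in (-π)..π, g (x - y) ^ 2 = ∫ y in (-π)..π, g y ^ 2 := by
  have hper : Function.Periodic (fun y => g y ^ 2) (2 * π) := fun y => by simp only [hg y]
  rw [intervalIntegral.integral_comp_sub_left (fun y => g y ^ 2)]
  convert hper.intervalIntegral_add_eq (x - π) (-π) using 2 <;> ring

theorem abs_circConv_le {g h : ℝ → ℝ} (hg : Continuous g) (hg_per : Function.Periodic g (2 * π))
    (hh : Continuous h) (x : ℝ) :
    |circConv g h x| ≤ √(∫ y in (-π)..π, g y ^ 2) * √(∫ y in (-π)..π, h y ^ 2) := by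
  have hπ : -π ≤ π := by linarith [pi_pos]
  have hint : ∀ u : ℝ → ℝ, Continuous u → Integrable u (volume.restrict (Ioc (-π) π)) :=
    fun u hu => (hu.integrableOn_Icc).mono_set Ioc_subset_Icc_self
  rw [← integral_comp_sub_sq_of_periodic hg_per x]
  simp only [circConv, intervalIntegral.integral_of_le hπ]
  exact abs_integral_mul_le_sqrt_mul_sqrt (hint _ (by fun_prop)) (hint _ (by fun_prop))
    (hint _ (by fun_prop))

theorem fderiv_snd_eq_of_transport {e : ℝ → ℝ → ℝ} {w w' : ℝ → ℝ} {Kp t : ℝ}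
    (he : Differentiable ℝ (Function.uncurry e)) (hw : ∀ x, HasDerivAt w (w' x) x)
    (hpde : ∀ x, deriv (fun s => e x s) t + deriv (fun z => e z t * (-w z)) x = -Kp * e x t)
    (x : ℝ) :
    fderiv ℝ (Function.uncurry e) (x, t) (0, 1)
      = -Kp * e x t + (fderiv ℝ (Function.uncurry e) (x, t) (1, 0) * w x + e x t * w' x) := by
  have h := hpde x
  rw [(hasDerivAt_uncurry_snd he x t).deriv,
    ((hasDerivAt_uncurry_fst he x t).fun_mul (hw x).fun_neg).deriv] at h
  linarith

theorem energy_deriv_le_of_transport {f f' : ℝ → ℝ} {e : ℝ → ℝ → ℝ} {Kp t : ℝ}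
    (hf_per : Function.Periodic f (2 * π)) (hf' : ∀ x, HasDerivAt f (f' x) x)
    (hf'_cont : Continuous f') (he : ContDiff ℝ 1 (Function.uncurry e))
    (he_per : ∀ x, e (x + 2 * π) t = e x t)
    (hpde : ∀ x, deriv (fun s => e x s) t
        + deriv (fun z => e z t * (-(circConv f (fun y => e y t) z))) x = -Kp * e x t) :
    ∫ x in (-π)..π, 2 * e x t * fderiv ℝ (Function.uncurry e) (x, t) (0, 1)
      ≤ (-(2 * Kp) + √(∫ x in (-π)..π, f' x ^ 2) * √(∫ x in (-π)..π, e x t ^ 2))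
        * ∫ x in (-π)..π, e x t ^ 2 := by
  have hdiff := he.differentiable one_ne_zero
  set u := fun x => e x t
  set ux := fun x => fderiv ℝ (Function.uncurry e) (x, t) (1, 0)
  set ut := fun x => fderiv ℝ (Function.uncurry e) (x, t) (0, 1)
  set w := circConv f u
  set w' := circConv f' u
  set c := √(∫ x in (-π)..π, f' x ^ 2) * √(∫ x in (-π)..π, u x ^ 2)
  have hu : Continuous u := he.continuous.comp (Continuous.prodMk_left t)
  have hux : Continuous ux :=
    ((he.continuous_fderiv one_ne_zero).clm_apply continuous_const).comp (Continuous.prodMk_left t)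
  have hw' : Continuous w' := continuous_circConv hf'_cont hu
  have hwc : Continuous w :=
    continuous_circConv (continuous_iff_continuousAt.2 fun x => (hf' x).continuousAt) hu
  have hw : ∀ x, HasDerivAt w (w' x) x := hasDerivAt_circConv hf' hf'_cont hu
  have hut_eq : ∀ x, ut x = -Kp * u x + (ux x * w x + u x * w' x) :=
    fderiv_snd_eq_of_transport hdiff hw hpde
  have hf'_per : Function.Periodic f' (2 * π) := by
    simpa only [funext fun x => (hf' x).deriv] using hf_per.deriv
  have hw'_le : ∀ x, w' x ≤ c := fun x =>
    (le_abs_self _).trans (abs_circConv_le hf'_cont hf'_per hu x)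
  have hu_per : u (-π) = u π := by
    simpa only [u, show -π + 2 * π = π by ring] using (he_per (-π)).symm
  have hw_per : w (-π) = w π := by
    simpa only [show -π + 2 * π = π by ring] using (hf_per.circConv u (-π)).symm
  have hibp : ∫ x in (-π)..π, 2 * u x * (ux x * w x + u x * w' x)
      = ∫ x in (-π)..π, u x ^ 2 * w' x :=
    integral_two_mul_mul_deriv_add_eq (hasDerivAt_uncurry_fst hdiff · t) hw hux hw' hu_per hw_per
  calc ∫ x in (-π)..π, 2 * e x t * ut x
      = ∫ x in (-π)..π, (-(2 * Kp) * u x ^ 2 + 2 * u x * (ux x * w x + u x * w' x)) :=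
        intervalIntegral.integral_congr fun x _ => by simp only [hut_eq, u]; ring
    _ = -(2 * Kp) * (∫ x in (-π)..π, u x ^ 2) + ∫ x in (-π)..π, u x ^ 2 * w' x := by
        rw [intervalIntegral.integral_add (Continuous.intervalIntegrable (by fun_prop) _ _)
          (Continuous.intervalIntegrable (by fun_prop) _ _),
          intervalIntegral.integral_const_mul, hibp]
    _ ≤ -(2 * Kp) * (∫ x in (-π)..π, u x ^ 2) + ∫ x in (-π)..π, u x ^ 2 * c := by
        gcongr
        exact intervalIntegral.integral_mono_on (by linarith [pi_pos])
          (Continuous.intervalIntegrable (by fun_prop) _ _)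
          (Continuous.intervalIntegrable (by fun_prop) _ _)
          fun x _ => mul_le_mul_of_nonneg_left (hw'_le x) (sq_nonneg _)
    _ = (-(2 * Kp) + c) * ∫ x in (-π)..π, u x ^ 2 := by
        rw [intervalIntegral.integral_mul_const]; ring

theorem stmt0_general (f f' : ℝ → ℝ) (e : ℝ → ℝ → ℝ) (Kp γ : ℝ)
    (hf_per : Function.Periodic f (2 * π))
    (hf' : ∀ x, HasDerivAt f (f' x) x)
    (hf'_cont : Continuous f')
    (he_smooth : ContDiff ℝ 1 fun p : ℝ × ℝ => e p.1 p.2)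
    (he_per : ∀ x t : ℝ, e (x + 2 * π) t = e x t)
    (hpde : ∀ x t : ℝ, 0 ≤ t →
      deriv (fun s => e x s) t
          + deriv (fun z => e z t * (-(circConv f (fun y => e y t) z))) x
        = -Kp * e x t)
    (hinit : Real.sqrt (∫ x in (-π)..π, (e x 0) ^ 2) < γ)
    (hgain : γ * Real.sqrt (∫ x in (-π)..π, (f' x) ^ 2) < 2 * Kp) :
    (∀ t : ℝ, 0 ≤ t →
        (∫ x in (-π)..π, (e x t) ^ 2)
          ≤ (∫ x in (-π)..π, (e x 0) ^ 2)
              * Real.exp (-(2 * Kp - γ * Real.sqrt (∫ x in (-π)..π, (f' x) ^ 2)) * t))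
      ∧ Tendsto (fun t => Real.sqrt (∫ x in (-π)..π, (e x t) ^ 2)) atTop (nhds 0) := by
  have hV_nonneg : ∀ t, 0 ≤ ∫ x in (-π)..π, e x t ^ 2 := fun t =>
    intervalIntegral.integral_nonneg (by linarith [pi_pos]) fun x _ => sq_nonneg _
  have hdecay := le_mul_exp_of_deriv_le_sqrt_mul (hasDerivAt_integral_sq he_smooth (-π) π)
    hV_nonneg (sqrt_nonneg _) hgain hinit fun t ht =>
      energy_deriv_le_of_transport hf_per hf' hf'_cont he_smooth (he_per · t) (hpde · t ht)
  exact ⟨hdecay, tendsto_sqrt_of_le_mul_exp (by linarith) hdecay⟩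

/-- Lyapunov convergence of the closed-loop error dynamics.
If the error `e` satisfies `e_t + ∂_x (e · (−V^e)) = −K_p e` with `V^e = f * e`,
`‖e(·,0)‖₂ < γ` and `2 K_p > γ ‖f_x‖₂`, then
`‖e(·,t)‖₂² ≤ ‖e(·,0)‖₂² exp(−(2K_p − γ‖f_x‖₂) t)` and `‖e(·,t)‖₂ → 0`. -/
theorem stmt0 (f f' : ℝ → ℝ) (e : ℝ → ℝ → ℝ) (Kp γ : ℝ)
    (hf_per : Function.Periodic f (2 * π))
    (hf' : ∀ x, HasDerivAt f (f' x) x)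
    (hf'_cont : Continuous f')
    (hKp : 0 < Kp) (hγ : 0 < γ)
    (he_smooth : ContDiff ℝ 1 fun p : ℝ × ℝ => e p.1 p.2)
    (he_per : ∀ x t : ℝ, e (x + 2 * π) t = e x t)
    (hpde : ∀ x t : ℝ, 0 ≤ t →
      deriv (fun s => e x s) t
          + deriv (fun z => e z t * (-(circConv f (fun y => e y t) z))) x
        = -Kp * e x t)
    (hinit : Real.sqrt (∫ x in (-π)..π, (e x 0) ^ 2) < γ)
    (hgain : γ * Real.sqrt (∫ x in (-π)..π, (f' x) ^ 2) < 2 * Kp) :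
    (∀ t : ℝ, 0 ≤ t →
        (∫ x in (-π)..π, (e x t) ^ 2)
          ≤ (∫ x in (-π)..π, (e x 0) ^ 2)
              * Real.exp (-(2 * Kp - γ * Real.sqrt (∫ x in (-π)..π, (f' x) ^ 2)) * t))
      ∧ Tendsto (fun t => Real.sqrt (∫ x in (-π)..π, (e x t) ^ 2)) atTop (nhds 0) :=
  stmt0_general f f' e Kp γ hf_per hf' hf'_cont he_smooth he_per hpde hinit hgain
end

section
/- Let K_p > 0, C ≥ 0, γ > 0 with 2K_p > Cγ, and let y : [0,∞) → ℝ be a differentiable function with y(t) ≥ 0 for all t, satisfying the differential inequality y'(t) ≤ ( −2K_p + C √(y(t)) ) y(t) for all t ≥ 0, and with initial condition √(y(0)) < γ. Then y(t) ≤ y(0) · exp( −(2K_p − Cγ) t ) for all t ≥ 0; in particular y(t) → 0 as t → ∞. -/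
open Real Filter

/-- Auxiliary: Grönwall estimate on `[0, b]` assuming the linear differential
inequality `deriv y t ≤ K * y t` on `[0, b)`. -/
lemma gronwall_aux (y : ℝ → ℝ) (K b : ℝ)
    (hdiff : ∀ t : ℝ, 0 ≤ t → DifferentiableAt ℝ y t)
    (hb : 0 ≤ b)
    (hbound : ∀ t ∈ Set.Ico (0:ℝ) b, deriv y t ≤ K * y t) :
    ∀ t ∈ Set.Icc (0:ℝ) b, y t ≤ y 0 * Real.exp (K * t) := by
  have hcont : ContinuousOn y (Set.Icc 0 b) := fun t ht =>
    ((hdiff t ht.1).continuousAt).continuousWithinAt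
  have H := le_gronwallBound_of_liminf_deriv_right_le (f := y) (f' := deriv y)
    (δ := y 0) (K := K) (ε := 0) (a := 0) (b := b) hcont
    (fun x hx r hr => by
      have := ((hdiff x hx.1).hasDerivAt.hasDerivWithinAt
        (s := Set.Ici x)).liminf_right_slope_le hr
      exact this.mono (fun z hz => by
        simpa [slope_def_field, div_eq_inv_mul] using hz))
    le_rfl
    (fun x hx => by simpa using hbound x hx)
  intro t ht
  have := H t ht
  rwa [sub_zero, gronwallBound_ε0] at this

/-- scalar Grönwall-type comparison lemma: if `y ≥ 0` is
differentiable, satisfies `y' ≤ (−2K_p + C √y) y` on `[0,∞)`, with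
`√(y 0) < γ` and `2K_p > Cγ`, then `y t ≤ y 0 · exp(−(2K_p − Cγ)t)` for all
`t ≥ 0` and `y t → 0` as `t → ∞`. -/
theorem stmt8 (Kp C γ : ℝ) (y : ℝ → ℝ)
    (hKp : 0 < Kp) (hC : 0 ≤ C) (hγ : 0 < γ) (hgain : C * γ < 2 * Kp)
    (hdiff : ∀ t : ℝ, 0 ≤ t → DifferentiableAt ℝ y t)
    (hy_nonneg : ∀ t : ℝ, 0 ≤ t → 0 ≤ y t)
    (hineq : ∀ t : ℝ, 0 ≤ t →
      deriv y t ≤ (-(2 * Kp) + C * Real.sqrt (y t)) * y t)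
    (hinit : Real.sqrt (y 0) < γ) :
    (∀ t : ℝ, 0 ≤ t → y t ≤ y 0 * Real.exp (-(2 * Kp - C * γ) * t))
      ∧ Tendsto y atTop (nhds 0) := by
  set K : ℝ := -(2 * Kp - C * γ) with hK
  have hKneg : K < 0 := by simp [hK]; linarith
  -- From √(y t) < γ we get the linear bound on the derivative.
  have key : ∀ t : ℝ, 0 ≤ t → Real.sqrt (y t) < γ → deriv y t ≤ K * y t := by
    intro t ht hs
    refine (hineq t ht).trans ?_
    have h1 : -(2 * Kp) + C * Real.sqrt (y t) ≤ K := by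
      have : C * Real.sqrt (y t) ≤ C * γ := mul_le_mul_of_nonneg_left hs.le hC
      simp only [hK]; linarith
    exact mul_le_mul_of_nonneg_right h1 (hy_nonneg t ht)
  have hy0 : y 0 < γ ^ 2 := by
    have := Real.sq_sqrt (hy_nonneg 0 le_rfl)
    nlinarith [Real.sqrt_nonneg (y 0)]
  -- invariance: y t < γ² for all t ≥ 0
  have hinv : ∀ t : ℝ, 0 ≤ t → y t < γ ^ 2 := by
    by_contra hcon
    push_neg at hcon
    obtain ⟨t₀, ht₀, hyt₀⟩ := hcon
    set S : Set ℝ := {t | 0 ≤ t ∧ γ ^ 2 ≤ y t} with hS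
    have hne : S.Nonempty := ⟨t₀, ht₀, hyt₀⟩
    have hbdd : BddBelow S := ⟨0, fun t ht => ht.1⟩
    set T : ℝ := sInf S with hT
    have hT0 : 0 ≤ T := le_csInf hne fun t ht => ht.1
    have hcontT : ContinuousAt y T := (hdiff T hT0).continuousAt
    -- y T ≥ γ²
    have hyT : γ ^ 2 ≤ y T := by
      by_contra hlt
      push_neg at hlt
      have hev : y ⁻¹' Set.Iio (γ ^ 2) ∈ nhds T := hcontT (Iio_mem_nhds hlt)
      have hcl : T ∈ closure S := csInf_mem_closure hne hbdd
      obtain ⟨s, hs1, hs2⟩ := mem_closure_iff_nhds.mp hcl _ hev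
      exact absurd hs2.2 (not_le.mpr hs1)
    -- On [0, T), y < γ²
    have hlt : ∀ t ∈ Set.Ico (0:ℝ) T, y t < γ ^ 2 := by
      intro t ht
      by_contra h
      push_neg at h
      exact absurd (csInf_le hbdd ⟨ht.1, h⟩) (not_le.mpr ht.2)
    have hboundT : ∀ t ∈ Set.Ico (0:ℝ) T, deriv y t ≤ K * y t := by
      intro t ht
      refine key t ht.1 ?_
      have := hlt t ht
      have := Real.sqrt_lt_sqrt (hy_nonneg t ht.1) this
      rwa [Real.sqrt_sq hγ.le] at this
    have := gronwall_aux y K T hdiff hT0 hboundT T ⟨hT0, le_rfl⟩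
    have hexp : Real.exp (K * T) ≤ 1 := by
      rw [Real.exp_le_one_iff]
      exact mul_nonpos_of_nonpos_of_nonneg hKneg.le hT0
    nlinarith [hy_nonneg 0 le_rfl, Real.exp_pos (K * T)]
  have hbound : ∀ t : ℝ, 0 ≤ t → deriv y t ≤ K * y t := by
    intro t ht
    refine key t ht ?_
    have := Real.sqrt_lt_sqrt (hy_nonneg t ht) (hinv t ht)
    rwa [Real.sqrt_sq hγ.le] at this
  have main : ∀ t : ℝ, 0 ≤ t → y t ≤ y 0 * Real.exp (K * t) := by
    intro t ht
    exact gronwall_aux y K t hdiff ht (fun s hs => hbound s hs.1) t ⟨ht, le_rfl⟩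
  refine ⟨main, ?_⟩
  have htend : Tendsto (fun t : ℝ => y 0 * Real.exp (K * t)) atTop (nhds 0) := by
    have : Tendsto (fun t : ℝ => K * t) atTop atBot :=
      tendsto_id.const_mul_atTop_of_neg hKneg
    simpa using (Real.tendsto_exp_atBot.comp this).const_mul (y 0)
  refine squeeze_zero' ?_ ?_ htend
  · exact eventually_atTop.mpr ⟨0, fun t ht => hy_nonneg t ht⟩
  · exact eventually_atTop.mpr ⟨0, fun t ht => main t ht⟩
end
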